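/- arXiv:1108.4181 — 3 statements merged into one kernel-verified Lean document; each statement's English description precedes it below -/
import Mathlib

section
/- Splitting a block-tridiagonal system at one interior block index K decouples it into two independent systems: after modifying the right-hand sides as in the dichotomy step, the concatenation of the solutions of the two subsystems together with X̄_K equals the unique solution of the original system, provided P and both principal submatrices are invertible. -/
/-!
Restricting `X` to the blocks `1, …, K-1` (resp. `K+1, …, N`) leaves the interior rows of
`P X = F` intact; at the cut row the coupling `B (K-1) X K` (resp. `A (K+1) X K`) to the discarded
block moves to the right-hand side, which is exactly the modified right-hand side of the
subsystem. Uniqueness of the subsystem's solution then identifies `Y` (resp. `Z`) with that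
restriction of `X`.
-/

open Set Matrix

section Tridiagonal

variable {R n : Type*} [Ring R] [Fintype n] (A B C : ℕ → Matrix n n R)

def tridiagRow (W : ℕ → n → R) (j : ℕ) : n → R :=
  -(A j *ᵥ W (j - 1)) + C j *ᵥ W j - B j *ᵥ W (j + 1)

variable {A B C}

theorem tridiagRow_indicator_Icc {X : ℕ → n → R} {lo hi j : ℕ} (hlo : 0 < lo)
    (hj : j ∈ Icc lo hi) :
    tridiagRow A B C ((Icc lo hi).indicator X) j =
      tridiagRow A B C X j + (if j = lo then A j *ᵥ X (lo - 1) else 0) +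
        (if j = hi then B j *ᵥ X (hi + 1) else 0) := by
  obtain ⟨hloj, hjhi⟩ := mem_Icc.mp hj
  have hprev : (Icc lo hi).indicator X (j - 1) = if j = lo then 0 else X (j - 1) := by
    split_ifs with h
    · exact indicator_of_notMem (by simp only [mem_Icc]; omega) _
    · exact indicator_of_mem (by simp only [mem_Icc]; omega) _
  have hnext : (Icc lo hi).indicator X (j + 1) = if j = hi then 0 else X (j + 1) := by
    split_ifs with h
    · exact indicator_of_notMem (by simp only [mem_Icc]; omega) _
    · exact indicator_of_mem (by simp only [mem_Icc]; omega) _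
  rw [tridiagRow, tridiagRow, hprev, hnext, indicator_of_mem hj]
  split_ifs <;> subst_vars <;> simp only [mulVec_zero, neg_zero, add_zero, sub_zero] <;> abel

end Tridiagonal

theorem stmt2_general (M N K : ℕ) (hKN : K < N)
    (A B C : ℕ → Matrix (Fin M) (Fin M) ℝ)
    (X F Y Z : ℕ → Fin M → ℝ)
    (hX0 : X 0 = 0) (hXhigh : ∀ j, N < j → X j = 0)
    (hsys : ∀ j, 1 ≤ j → j ≤ N →
        -(A j).mulVec (X (j - 1)) + (C j).mulVec (X j) - (B j).mulVec (X (j + 1)) = F j)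
    (hinvL : ∀ G : ℕ → Fin M → ℝ, ∃! W : ℕ → Fin M → ℝ,
      (∀ j, j = 0 ∨ K - 1 < j → W j = 0) ∧
      ∀ j, 1 ≤ j → j ≤ K - 1 →
        -(A j).mulVec (W (j - 1)) + (C j).mulVec (W j) - (B j).mulVec (W (j + 1)) = G j)
    (hinvT : ∀ G : ℕ → Fin M → ℝ, ∃! W : ℕ → Fin M → ℝ,
      (∀ j, j ≤ K ∨ N < j → W j = 0) ∧
      ∀ j, K + 1 ≤ j → j ≤ N →
        -(A j).mulVec (W (j - 1)) + (C j).mulVec (W j) - (B j).mulVec (W (j + 1)) = G j)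
    (hYzero : ∀ j, j = 0 ∨ K - 1 < j → Y j = 0)
    (hY : ∀ j, 1 ≤ j → j ≤ K - 1 →
        -(A j).mulVec (Y (j - 1)) + (C j).mulVec (Y j) - (B j).mulVec (Y (j + 1)) =
          F j + (if j = K - 1 then (B j).mulVec (X K) else 0))
    (hZzero : ∀ j, j ≤ K ∨ N < j → Z j = 0)
    (hZ : ∀ j, K + 1 ≤ j → j ≤ N →
        -(A j).mulVec (Z (j - 1)) + (C j).mulVec (Z j) - (B j).mulVec (Z (j + 1)) =
          F j + (if j = K + 1 then (A j).mulVec (X K) else 0)) :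
    (∀ j, 1 ≤ j → j < K → Y j = X j) ∧ (∀ j, K < j → j ≤ N → Z j = X j) := by
  have hrow : ∀ j, 1 ≤ j → j ≤ N → tridiagRow A B C X j = F j := hsys
  have hYX : Y = (Icc 1 (K - 1)).indicator X := by
    refine (hinvL fun j => F j + if j = K - 1 then B j *ᵥ X K else 0).unique ⟨hYzero, hY⟩
      ⟨fun j hj => indicator_of_notMem (by simp only [mem_Icc]; omega) _, fun j hj1 hj2 => ?_⟩
    change tridiagRow A B C _ j = _
    rw [tridiagRow_indicator_Icc one_pos ⟨hj1, hj2⟩, hrow j hj1 (by omega), Nat.sub_self, hX0,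
      mulVec_zero, ite_self, add_zero, Nat.sub_add_cancel (by omega : 1 ≤ K)]
  have hZX : Z = (Icc (K + 1) N).indicator X := by
    refine (hinvT fun j => F j + if j = K + 1 then A j *ᵥ X K else 0).unique ⟨hZzero, hZ⟩
      ⟨fun j hj => indicator_of_notMem (by simp only [mem_Icc]; omega) _, fun j hj1 hj2 => ?_⟩
    change tridiagRow A B C _ j = _
    rw [tridiagRow_indicator_Icc K.add_one_pos ⟨hj1, hj2⟩, hrow j (by omega) hj2,
      Nat.add_sub_cancel, hXhigh (N + 1) N.lt_succ_self, mulVec_zero, ite_self, add_zero]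
  refine ⟨fun j hj1 hjK => ?_, fun j hKj hjN => ?_⟩
  · rw [hYX, indicator_of_mem (by simp only [mem_Icc]; omega)]
  · rw [hZX, indicator_of_mem (by simp only [mem_Icc]; omega)]

/-- Splitting a block-tridiagonal system at an interior block index `K`
decouples it into two independent systems.  `P` is invertible (unique solvability `hinvP`),
`X` is the solution of `P X = F` (so `X K` is the `K`-th block of `P⁻¹ F`), and both
principal submatrices (leading, on blocks `1,…,K-1`, and trailing, on blocks `K+1,…,N`)
are invertible (`hinvL`, `hinvT`).  If `Y` solves the leading subsystem with right-hand
side modified at block `K-1` by `B (K-1) ⬝ X K`, and `Z` solves the trailing subsystem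
with right-hand side modified at block `K+1` by `A (K+1) ⬝ X K`, then the concatenation
`(Y 1,…,Y (K-1), X K, Z (K+1),…,Z N)` equals the unique solution `X` of the original system. -/
theorem stmt2 (M N K : ℕ) (hK1 : 1 < K) (hKN : K < N)
    (A B C : ℕ → Matrix (Fin M) (Fin M) ℝ)
    (X F Y Z : ℕ → Fin M → ℝ)
    (hX0 : X 0 = 0) (hXhigh : ∀ j, N < j → X j = 0)
    (hinvP : ∀ G : ℕ → Fin M → ℝ, ∃! W : ℕ → Fin M → ℝ,
      (∀ j, j = 0 ∨ N < j → W j = 0) ∧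
      ∀ j, 1 ≤ j → j ≤ N →
        -(A j).mulVec (W (j - 1)) + (C j).mulVec (W j) - (B j).mulVec (W (j + 1)) = G j)
    (hsys : ∀ j, 1 ≤ j → j ≤ N →
        -(A j).mulVec (X (j - 1)) + (C j).mulVec (X j) - (B j).mulVec (X (j + 1)) = F j)
    (hinvL : ∀ G : ℕ → Fin M → ℝ, ∃! W : ℕ → Fin M → ℝ,
      (∀ j, j = 0 ∨ K - 1 < j → W j = 0) ∧
      ∀ j, 1 ≤ j → j ≤ K - 1 →
        -(A j).mulVec (W (j - 1)) + (C j).mulVec (W j) - (B j).mulVec (W (j + 1)) = G j)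
    (hinvT : ∀ G : ℕ → Fin M → ℝ, ∃! W : ℕ → Fin M → ℝ,
      (∀ j, j ≤ K ∨ N < j → W j = 0) ∧
      ∀ j, K + 1 ≤ j → j ≤ N →
        -(A j).mulVec (W (j - 1)) + (C j).mulVec (W j) - (B j).mulVec (W (j + 1)) = G j)
    (hYzero : ∀ j, j = 0 ∨ K - 1 < j → Y j = 0)
    (hY : ∀ j, 1 ≤ j → j ≤ K - 1 →
        -(A j).mulVec (Y (j - 1)) + (C j).mulVec (Y j) - (B j).mulVec (Y (j + 1)) =
          F j + (if j = K - 1 then (B j).mulVec (X K) else 0))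
    (hZzero : ∀ j, j ≤ K ∨ N < j → Z j = 0)
    (hZ : ∀ j, K + 1 ≤ j → j ≤ N →
        -(A j).mulVec (Z (j - 1)) + (C j).mulVec (Z j) - (B j).mulVec (Z (j + 1)) =
          F j + (if j = K + 1 then (A j).mulVec (X K) else 0)) :
    (∀ j, 1 ≤ j → j < K → Y j = X j) ∧ (∀ j, K < j → j ≤ N → Z j = X j) :=
  stmt2_general M N K hKN A B C X F Y Z hX0 hXhigh hsys hinvL hinvT hYzero hY hZzero hZ
end

section
/- Reduced system correctness: with U_i, V_i, W_i defined on each subinterval [K, K+L] as in the superposition principle, if X solves the full block-tridiagonal system PX = F, then the interface blocks X̄_K for K = 1, L+1, 2L+1, ..., (p-1)L+1 satisfy the reduced block-tridiagonal system -[A_K U_{K-1}] X̄_{K-L} + [C_K - A_K V_{K-1} - B_K U_{K+1}] X̄_K - [B_K V_{K+1}] X̄_{K+L} = F̄_K + A_K W_{K-1} + B_K W_{K+1}, with conventions U_0 = V_0 = 0 and X̄_{N+1} = 0. -/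
/-! On a subinterval `[a, b]`, the difference between `X` and the superposition
`U i X_a + V i X_b + W i` has zero boundary values and solves the homogeneous recurrence,
so by uniqueness of the interior boundary value problem `X` equals the superposition.
Substituting this for the neighbours `X_{K-1}` and `X_{K+1}` of an interface block in the
`K`-th equation of `P X = F` gives the reduced equation. -/

open Matrix

namespace BlockTridiag

variable {R n : Type*} [Ring R] [Fintype n]

/-- Row `i` of `P Y`, for `P` with blocks `-A i, C i, -B i`. -/
def apply (A B C : ℕ → Matrix n n R) (Y : ℕ → n → R) (i : ℕ) : n → R :=
  -(A i *ᵥ Y (i - 1)) + C i *ᵥ Y i - B i *ᵥ Y (i + 1)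

def mul (A B C : ℕ → Matrix n n R) (Z : ℕ → Matrix n n R) (i : ℕ) : Matrix n n R :=
  -(A i) * Z (i - 1) + C i * Z i - B i * Z (i + 1)

variable {A B C : ℕ → Matrix n n R}

theorem apply_superposition (U V : ℕ → Matrix n n R) (W : ℕ → n → R) (x y : n → R)
    (i : ℕ) :
    apply A B C (fun j => U j *ᵥ x + V j *ᵥ y + W j) i =
      mul A B C U i *ᵥ x + mul A B C V i *ᵥ y + apply A B C W i := by
  simp only [apply, mul, mulVec_add, add_mulVec, sub_mulVec, neg_mulVec, ← mulVec_mulVec]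
  abel

theorem eq_superposition [DecidableEq n] {a b : ℕ} {U V : ℕ → Matrix n n R} {W X F : ℕ → n → R}
    (huniq : ∀ Y Y' : ℕ → n → R, Y a = Y' a → Y b = Y' b →
      (∀ i, a < i → i < b → apply A B C Y i = apply A B C Y' i) →
      ∀ i, a ≤ i → i ≤ b → Y i = Y' i)
    (hU : U a = 1 ∧ U b = 0) (hV : V a = 0 ∧ V b = 1) (hW : W a = 0 ∧ W b = 0)
    (hUrec : ∀ i, a < i → i < b → mul A B C U i = 0)
    (hVrec : ∀ i, a < i → i < b → mul A B C V i = 0)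
    (hWrec : ∀ i, a < i → i < b → apply A B C W i = F i)
    (hX : ∀ i, a < i → i < b → apply A B C X i = F i) :
    ∀ i, a ≤ i → i ≤ b → X i = U i *ᵥ X a + V i *ᵥ X b + W i := by
  refine huniq _ _ (by simp [hU.1, hV.1, hW.1]) (by simp [hU.2, hV.2, hW.2]) fun i hai hib => ?_
  rw [apply_superposition, hX i hai hib, hUrec i hai hib, hVrec i hai hib, hWrec i hai hib]
  simp

end BlockTridiag

theorem reduced_equation_of_superposition {R n : Type*} [Ring R] [Fintype n]
    {A B C Um Vm Up Vp : Matrix n n R} {xm x xp xl xr f wm wp : n → R}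
    (heq : -(A *ᵥ xm) + C *ᵥ x - B *ᵥ xp = f)
    (hm : A *ᵥ xm = A *ᵥ (Um *ᵥ xl + Vm *ᵥ x + wm))
    (hp : xp = Up *ᵥ x + Vp *ᵥ xr + wp) :
    -((A * Um) *ᵥ xl) + (C - A * Vm - B * Up) *ᵥ x - (B * Vp) *ᵥ xr =
      f + A *ᵥ wm + B *ᵥ wp := by
  rw [← heq, hm, hp]
  simp only [mulVec_add, sub_mulVec, ← mulVec_mulVec]
  abel

/-- Interface blocks are `K = k * L + 1`. For `k = 0` the indices `k - 1` and `K - L` are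
truncated-subtraction junk, harmless since they only occur multiplied by `A 1 = 0`. -/
theorem stmt4_general (M L p N : ℕ) (hL : 1 ≤ L) (hN : N = p * L)
    (A B C : ℕ → Matrix (Fin M) (Fin M) ℝ)
    (X F : ℕ → Fin M → ℝ)
    (U V : ℕ → ℕ → Matrix (Fin M) (Fin M) ℝ)
    (W : ℕ → ℕ → Fin M → ℝ)
    (hA1 : A 1 = 0)
    (hsys : ∀ j, 1 ≤ j → j ≤ N →
        -(A j).mulVec (X (j - 1)) + (C j).mulVec (X j) - (B j).mulVec (X (j + 1)) = F j)
    (hUbc : ∀ k, k < p → U k (k * L + 1) = 1 ∧ U k (k * L + L + 1) = 0)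
    (hVbc : ∀ k, k < p → V k (k * L + 1) = 0 ∧ V k (k * L + L + 1) = 1)
    (hWbc : ∀ k, k < p → W k (k * L + 1) = 0 ∧ W k (k * L + L + 1) = 0)
    (hUrec : ∀ k, k < p → ∀ i, k * L + 1 < i → i < k * L + L + 1 →
        -(A i) * U k (i - 1) + C i * U k i - B i * U k (i + 1) = 0)
    (hVrec : ∀ k, k < p → ∀ i, k * L + 1 < i → i < k * L + L + 1 →
        -(A i) * V k (i - 1) + C i * V k i - B i * V k (i + 1) = 0)
    (hWrec : ∀ k, k < p → ∀ i, k * L + 1 < i → i < k * L + L + 1 →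
        -(A i).mulVec (W k (i - 1)) + (C i).mulVec (W k i) - (B i).mulVec (W k (i + 1)) = F i)
    (huniq : ∀ k, k < p → ∀ Y Y' : ℕ → Fin M → ℝ,
        Y (k * L + 1) = Y' (k * L + 1) → Y (k * L + L + 1) = Y' (k * L + L + 1) →
        (∀ i, k * L + 1 < i → i < k * L + L + 1 →
          -(A i).mulVec (Y (i - 1)) + (C i).mulVec (Y i) - (B i).mulVec (Y (i + 1)) =
          -(A i).mulVec (Y' (i - 1)) + (C i).mulVec (Y' i) - (B i).mulVec (Y' (i + 1))) →
        ∀ i, k * L + 1 ≤ i → i ≤ k * L + L + 1 → Y i = Y' i) :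
    ∀ k, k < p →
      -(A (k * L + 1) * U (k - 1) (k * L)).mulVec (X (k * L + 1 - L)) +
        (C (k * L + 1) - A (k * L + 1) * V (k - 1) (k * L)
          - B (k * L + 1) * U k (k * L + 2)).mulVec (X (k * L + 1)) -
        (B (k * L + 1) * V k (k * L + 2)).mulVec (X (k * L + 1 + L)) =
      F (k * L + 1) + (A (k * L + 1)).mulVec (W (k - 1) (k * L)) +
        (B (k * L + 1)).mulVec (W k (k * L + 2)) := by
  have hkN : ∀ k, k < p → k * L + L ≤ N := fun k hk => by
    rw [hN, ← Nat.succ_mul]; exact Nat.mul_le_mul_right L hk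
  have hsup : ∀ k, k < p → ∀ i, k * L + 1 ≤ i → i ≤ k * L + L + 1 →
      X i = U k i *ᵥ X (k * L + 1) + V k i *ᵥ X (k * L + L + 1) + W k i := fun k hk =>
    BlockTridiag.eq_superposition (huniq k hk) (hUbc k hk) (hVbc k hk) (hWbc k hk)
      (hUrec k hk) (hVrec k hk) (hWrec k hk)
      fun i hai hib => hsys i (by omega) (by have := hkN k hk; omega)
  intro k hk
  refine reduced_equation_of_superposition (hsys _ le_add_self (by have := hkN k hk; omega))
    ?_ ?_
  · rcases k with _ | m
    · simp [hA1]
    · have hidx : (m + 1) * L = m * L + L := Nat.succ_mul m L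
      rw [hidx, show m * L + L + 1 - L = m * L + 1 by omega, Nat.add_sub_cancel,
        Nat.add_sub_cancel, hsup m (by omega) _ (by omega) le_self_add]
  · rw [Nat.add_right_comm (k * L) 1 L]
    exact hsup k hk (k * L + 2) (by omega) (by omega)

/-- Reduced system correctness.  `N = p*L`; the subintervals are
`[k*L+1, k*L+L+1]` for `k = 0,…,p-1`, with interface blocks `K = k*L+1`.  On each
subinterval, `U k`, `V k`, `W k` solve the homogeneous / inhomogeneous three-term
recurrences with boundary values `U = 1/0`, `V = 0/1`, `W = 0/0`, and (as they are
*defined* by these boundary value problems) the interior boundary value problems are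
uniquely solvable (`huniq`).  Conventions: `A 1 = 0` and `B N = 0` (these blocks do not
occur in `P`), `X 0 = 0` and `X j = 0` for `j > N` (in particular `X (N+1) = 0`), and for
`k = 0` the natural-number expressions `U (k-1) (K-1)`, `V (k-1) (K-1)`, `W (k-1) (K-1)`
are multiplied by `A 1 = 0`, realizing the convention `U 0 = V 0 = 0`.  If `X` solves the
full block-tridiagonal system `P X = F`, then the interface blocks satisfy the reduced
block-tridiagonal system. -/
theorem stmt4 (M L p N : ℕ) (hL : 1 ≤ L) (hp : 1 ≤ p) (hN : N = p * L)
    (A B C : ℕ → Matrix (Fin M) (Fin M) ℝ)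
    (X F : ℕ → Fin M → ℝ)
    (U V : ℕ → ℕ → Matrix (Fin M) (Fin M) ℝ)
    (W : ℕ → ℕ → Fin M → ℝ)
    (hA1 : A 1 = 0) (hBN : B N = 0)
    (hX0 : X 0 = 0) (hXhigh : ∀ j, N < j → X j = 0)
    (hsys : ∀ j, 1 ≤ j → j ≤ N →
        -(A j).mulVec (X (j - 1)) + (C j).mulVec (X j) - (B j).mulVec (X (j + 1)) = F j)
    (hUbc : ∀ k, k < p → U k (k * L + 1) = 1 ∧ U k (k * L + L + 1) = 0)
    (hVbc : ∀ k, k < p → V k (k * L + 1) = 0 ∧ V k (k * L + L + 1) = 1)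
    (hWbc : ∀ k, k < p → W k (k * L + 1) = 0 ∧ W k (k * L + L + 1) = 0)
    (hUrec : ∀ k, k < p → ∀ i, k * L + 1 < i → i < k * L + L + 1 →
        -(A i) * U k (i - 1) + C i * U k i - B i * U k (i + 1) = 0)
    (hVrec : ∀ k, k < p → ∀ i, k * L + 1 < i → i < k * L + L + 1 →
        -(A i) * V k (i - 1) + C i * V k i - B i * V k (i + 1) = 0)
    (hWrec : ∀ k, k < p → ∀ i, k * L + 1 < i → i < k * L + L + 1 →
        -(A i).mulVec (W k (i - 1)) + (C i).mulVec (W k i) - (B i).mulVec (W k (i + 1)) = F i)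
    (huniq : ∀ k, k < p → ∀ Y Y' : ℕ → Fin M → ℝ,
        Y (k * L + 1) = Y' (k * L + 1) → Y (k * L + L + 1) = Y' (k * L + L + 1) →
        (∀ i, k * L + 1 < i → i < k * L + L + 1 →
          -(A i).mulVec (Y (i - 1)) + (C i).mulVec (Y i) - (B i).mulVec (Y (i + 1)) =
          -(A i).mulVec (Y' (i - 1)) + (C i).mulVec (Y' i) - (B i).mulVec (Y' (i + 1))) →
        ∀ i, k * L + 1 ≤ i → i ≤ k * L + L + 1 → Y i = Y' i) :
    ∀ k, k < p →
      -(A (k * L + 1) * U (k - 1) (k * L)).mulVec (X (k * L + 1 - L)) +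
        (C (k * L + 1) - A (k * L + 1) * V (k - 1) (k * L)
          - B (k * L + 1) * U k (k * L + 2)).mulVec (X (k * L + 1)) -
        (B (k * L + 1) * V k (k * L + 2)).mulVec (X (k * L + 1 + L)) =
      F (k * L + 1) + (A (k * L + 1)).mulVec (W (k - 1) (k * L)) +
        (B (k * L + 1)).mulVec (W k (k * L + 2)) :=
  stmt4_general M L p N hL hN A B C X F U V W hA1 hsys hUbc hVbc hWbc hUrec hVrec hWrec huniq
end

section
/- If the interface blocks X̄_K (K = 1, L+1, ..., (p-1)L+1) solve the reduced system and the interior blocks are reconstructed via X̄_i = U_i X̄_K + V_i X̄_{K+L} + W_i, then the resulting full vector X solves PX = F. -/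
/-! On each segment `[k L + 1, k L + L + 1]` the reconstructed `X` is a superposition of the
two homogeneous solutions `U k`, `V k` and the particular solution `W k`, so it satisfies every
interior row of `P X = F` by linearity. At an interface row `k L + 1` the neighbours `X (k L)` and
`X (k L + 2)` come from the reconstructions on the two adjacent segments; substituting them turns
that row into row `k` of the reduced system. For `k = 0` the left neighbour is absent since
`A 1 = 0`. -/

open Matrix

theorem exists_lt_and_mul_add_one_le_and_lt {L p j : ℕ} (hL : 0 < L) (hj : 1 ≤ j)
    (hjp : j ≤ p * L) : ∃ k < p, k * L + 1 ≤ j ∧ j < k * L + L + 1 := by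
  refine ⟨(j - 1) / L, (Nat.div_lt_iff_lt_mul hL).2 (by omega), ?_, ?_⟩
  · have := Nat.div_mul_le_self (j - 1) L
    omega
  · have := Nat.lt_div_mul_add (a := j - 1) hL
    omega

section BlockRow

variable {n R : Type*} [Fintype n] [CommRing R]

theorem blockRow_superposition {A B C U₁ U₂ U₃ V₁ V₂ V₃ : Matrix n n R}
    {w₁ w₂ w₃ x y f : n → R}
    (hU : -A * U₁ + C * U₂ - B * U₃ = 0) (hV : -A * V₁ + C * V₂ - B * V₃ = 0)
    (hW : -(A *ᵥ w₁) + C *ᵥ w₂ - B *ᵥ w₃ = f) :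
    -(A *ᵥ (U₁ *ᵥ x + V₁ *ᵥ y + w₁)) + C *ᵥ (U₂ *ᵥ x + V₂ *ᵥ y + w₂)
      - B *ᵥ (U₃ *ᵥ x + V₃ *ᵥ y + w₃) = f :=
  calc _ = (-A * U₁ + C * U₂ - B * U₃) *ᵥ x + (-A * V₁ + C * V₂ - B * V₃) *ᵥ y
          + (-(A *ᵥ w₁) + C *ᵥ w₂ - B *ᵥ w₃) := by
        simp only [add_mulVec, sub_mulVec, neg_mul, neg_mulVec, ← mulVec_mulVec, mulVec_add]
        abel
    _ = f := by rw [hU, hV, hW, zero_mulVec, zero_mulVec, zero_add, zero_add]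

theorem blockRow_interface {A B C U₁ V₁ U₃ V₃ : Matrix n n R}
    {w₁ w₃ x₁ x₂ x₃ y₁ y₃ f : n → R}
    (h₁ : A *ᵥ y₁ = A *ᵥ (U₁ *ᵥ x₁ + V₁ *ᵥ x₂ + w₁))
    (h₃ : y₃ = U₃ *ᵥ x₂ + V₃ *ᵥ x₃ + w₃)
    (hred : -((A * U₁) *ᵥ x₁) + (C - A * V₁ - B * U₃) *ᵥ x₂ - (B * V₃) *ᵥ x₃
      = f + A *ᵥ w₁ + B *ᵥ w₃) :
    -(A *ᵥ y₁) + C *ᵥ x₂ - B *ᵥ y₃ = f := by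
  subst h₃
  rw [h₁]
  simp only [sub_mulVec, ← mulVec_mulVec, mulVec_add] at hred ⊢
  linear_combination hred

variable {A B C : ℕ → Matrix n n R} {X F : ℕ → n → R}

theorem blockRow_eq_of_interior {U V : ℕ → Matrix n n R} {W : ℕ → n → R} {K L i : ℕ}
    (hU : ∀ i, K + 1 < i → i < K + L + 1 →
      -(A i) * U (i - 1) + C i * U i - B i * U (i + 1) = 0)
    (hV : ∀ i, K + 1 < i → i < K + L + 1 →
      -(A i) * V (i - 1) + C i * V i - B i * V (i + 1) = 0)
    (hW : ∀ i, K + 1 < i → i < K + L + 1 →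
      -(A i *ᵥ W (i - 1)) + C i *ᵥ W i - B i *ᵥ W (i + 1) = F i)
    (hX : ∀ i, K + 1 ≤ i → i ≤ K + L + 1 →
      X i = U i *ᵥ X (K + 1) + V i *ᵥ X (K + L + 1) + W i)
    (hKi : K + 1 < i) (hiL : i < K + L + 1) :
    -(A i *ᵥ X (i - 1)) + C i *ᵥ X i - B i *ᵥ X (i + 1) = F i := by
  rw [hX (i - 1) (by omega) (by omega), hX i (by omega) (by omega),
    hX (i + 1) (by omega) (by omega)]
  exact blockRow_superposition (hU i hKi hiL) (hV i hKi hiL) (hW i hKi hiL)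

end BlockRow

theorem stmt5_general (M L p N : ℕ) (hL : 1 ≤ L) (hN : N = p * L)
    (A B C : ℕ → Matrix (Fin M) (Fin M) ℝ)
    (X F : ℕ → Fin M → ℝ)
    (U V : ℕ → ℕ → Matrix (Fin M) (Fin M) ℝ)
    (W : ℕ → ℕ → Fin M → ℝ)
    (hA1 : A 1 = 0)
    (hUrec : ∀ k, k < p → ∀ i, k * L + 1 < i → i < k * L + L + 1 →
        -(A i) * U k (i - 1) + C i * U k i - B i * U k (i + 1) = 0)
    (hVrec : ∀ k, k < p → ∀ i, k * L + 1 < i → i < k * L + L + 1 →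
        -(A i) * V k (i - 1) + C i * V k i - B i * V k (i + 1) = 0)
    (hWrec : ∀ k, k < p → ∀ i, k * L + 1 < i → i < k * L + L + 1 →
        -(A i).mulVec (W k (i - 1)) + (C i).mulVec (W k i) - (B i).mulVec (W k (i + 1)) = F i)
    (hrecon : ∀ k, k < p → ∀ i, k * L + 1 ≤ i → i ≤ k * L + L + 1 →
        X i = (U k i).mulVec (X (k * L + 1)) + (V k i).mulVec (X (k * L + L + 1)) + W k i)
    (hred : ∀ k, k < p →
      -(A (k * L + 1) * U (k - 1) (k * L)).mulVec (X (k * L + 1 - L)) +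
        (C (k * L + 1) - A (k * L + 1) * V (k - 1) (k * L)
          - B (k * L + 1) * U k (k * L + 2)).mulVec (X (k * L + 1)) -
        (B (k * L + 1) * V k (k * L + 2)).mulVec (X (k * L + 1 + L)) =
      F (k * L + 1) + (A (k * L + 1)).mulVec (W (k - 1) (k * L)) +
        (B (k * L + 1)).mulVec (W k (k * L + 2))) :
    ∀ j, 1 ≤ j → j ≤ N →
      -(A j).mulVec (X (j - 1)) + (C j).mulVec (X j) - (B j).mulVec (X (j + 1)) = F j := by
  intro j hj hjN
  obtain ⟨k, hk, hkj, hjk⟩ := exists_lt_and_mul_add_one_le_and_lt hL hj (hN ▸ hjN)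
  obtain rfl | hkj := hkj.eq_or_lt
  · have hleft : A (k * L + 1) *ᵥ X (k * L) = A (k * L + 1) *ᵥ (U (k - 1) (k * L) *ᵥ
        X (k * L + 1 - L) + V (k - 1) (k * L) *ᵥ X (k * L + 1) + W (k - 1) (k * L)) := by
      rcases k with _ | k
      · simp [hA1]
      · have hprev : k * L + L + 1 - L = k * L + 1 := by omega
        rw [Nat.succ_mul, Nat.add_sub_cancel, hprev,
          hrecon k (by omega) (k * L + L) (by omega) le_self_add]
    have hright := hrecon k hk (k * L + 2) (by omega) (by omega)
    rw [Nat.add_right_comm] at hright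
    exact blockRow_interface hleft hright (hred k hk)
  · exact blockRow_eq_of_interior (hUrec k hk) (hVrec k hk) (hWrec k hk) (hrecon k hk) hkj hjk

/-- Reconstruction: if the interface blocks `X (k*L+1)`, `k = 0,…,p-1`,
solve the reduced block-tridiagonal system (`hred`) and the interior blocks are
reconstructed by superposition `X i = U k i ⬝ X K + V k i ⬝ X (K+L) + W k i` on each
subinterval `[K, K+L]`, `K = k*L+1` (`hrecon`), then the resulting full vector `X`
solves the original block-tridiagonal system `P X = F`.  Conventions as before:
`A 1 = 0`, `B N = 0`, `X 0 = 0`, `X j = 0` for `j > N`. -/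
theorem stmt5 (M L p N : ℕ) (hL : 1 ≤ L) (hp : 1 ≤ p) (hN : N = p * L)
    (A B C : ℕ → Matrix (Fin M) (Fin M) ℝ)
    (X F : ℕ → Fin M → ℝ)
    (U V : ℕ → ℕ → Matrix (Fin M) (Fin M) ℝ)
    (W : ℕ → ℕ → Fin M → ℝ)
    (hA1 : A 1 = 0) (hBN : B N = 0)
    (hX0 : X 0 = 0) (hXhigh : ∀ j, N < j → X j = 0)
    (hUbc : ∀ k, k < p → U k (k * L + 1) = 1 ∧ U k (k * L + L + 1) = 0)
    (hVbc : ∀ k, k < p → V k (k * L + 1) = 0 ∧ V k (k * L + L + 1) = 1)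
    (hWbc : ∀ k, k < p → W k (k * L + 1) = 0 ∧ W k (k * L + L + 1) = 0)
    (hUrec : ∀ k, k < p → ∀ i, k * L + 1 < i → i < k * L + L + 1 →
        -(A i) * U k (i - 1) + C i * U k i - B i * U k (i + 1) = 0)
    (hVrec : ∀ k, k < p → ∀ i, k * L + 1 < i → i < k * L + L + 1 →
        -(A i) * V k (i - 1) + C i * V k i - B i * V k (i + 1) = 0)
    (hWrec : ∀ k, k < p → ∀ i, k * L + 1 < i → i < k * L + L + 1 →
        -(A i).mulVec (W k (i - 1)) + (C i).mulVec (W k i) - (B i).mulVec (W k (i + 1)) = F i)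
    (hrecon : ∀ k, k < p → ∀ i, k * L + 1 ≤ i → i ≤ k * L + L + 1 →
        X i = (U k i).mulVec (X (k * L + 1)) + (V k i).mulVec (X (k * L + L + 1)) + W k i)
    (hred : ∀ k, k < p →
      -(A (k * L + 1) * U (k - 1) (k * L)).mulVec (X (k * L + 1 - L)) +
        (C (k * L + 1) - A (k * L + 1) * V (k - 1) (k * L)
          - B (k * L + 1) * U k (k * L + 2)).mulVec (X (k * L + 1)) -
        (B (k * L + 1) * V k (k * L + 2)).mulVec (X (k * L + 1 + L)) =
      F (k * L + 1) + (A (k * L + 1)).mulVec (W (k - 1) (k * L)) +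
        (B (k * L + 1)).mulVec (W k (k * L + 2))) :
    ∀ j, 1 ≤ j → j ≤ N →
      -(A j).mulVec (X (j - 1)) + (C j).mulVec (X j) - (B j).mulVec (X (j + 1)) = F j :=
  stmt5_general M L p N hL hN A B C X F U V W hA1 hUrec hVrec hWrec hrecon hred
end
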